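/- arXiv:1602.03899 — 2 statements merged into one kernel-verified Lean document; each statement's English description precedes it below -/
import Mathlib

section
/- Let G be a graph. Then the following properties of a subset X ⊆ V are equivalent: (1) the rank of τ_G(X) in M[IAS(G)] is ≥ 2·|X|; (2) the rank of τ_G(X) in M[IAS(G)] equals 2·|X|; (3) no transverse circuit of M[IAS(G)] is contained in τ_G(X). -/
open scoped ENat

variable {V : Type*} [Fintype V] [DecidableEq V]

/-- The column of the matrix `IAS(G) = (I | A | A+I)` indexed by `(v, i)`:
`i = 0` gives `φ(v)` (identity column), `i = 1` gives `χ(v)` (column of `A`),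
`i = 2` gives `ψ(v)` (column of `A + I`). -/
def iasCol (A : Matrix V V (ZMod 2)) : V × Fin 3 → V → ZMod 2 :=
  fun p w =>
    if p.2 = 0 then (if w = p.1 then 1 else 0)
    else if p.2 = 1 then A w p.1
    else A w p.1 + (if w = p.1 then 1 else 0)

/-- The rank of a subset of the ground set `W(G) = V × Fin 3` of the isotropic
matroid: the GF(2)-rank of the corresponding set of columns. -/
noncomputable def iasRank (A : Matrix V V (ZMod 2)) (S : Set (V × Fin 3)) : ℕ :=
  Module.finrank (ZMod 2) (Submodule.span (ZMod 2) (iasCol A '' S))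

/-- The connectivity function `λ(S) = r(S) + r(W - S) - r(M)`. -/
noncomputable def iasLambda (A : Matrix V V (ZMod 2)) (S : Set (V × Fin 3)) : ℕ :=
  iasRank A S + iasRank A Sᶜ - iasRank A Set.univ

/-- Independence in the isotropic matroid. -/
def iasIndep (A : Matrix V V (ZMod 2)) (S : Set (V × Fin 3)) : Prop :=
  LinearIndependent (ZMod 2) (fun s : S => iasCol A s.1)

/-- Circuits of the isotropic matroid: minimal dependent sets. -/
def iasCircuit (A : Matrix V V (ZMod 2)) (C : Set (V × Fin 3)) : Prop :=
  ¬ iasIndep A C ∧ ∀ S ⊂ C, iasIndep A S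

/-- An ordinary `k`-separation: `λ(S) < k` and `|S|, |W - S| ≥ k`. -/
def OrdinarySep (A : Matrix V V (ZMod 2)) (k : ℕ) (S : Set (V × Fin 3)) : Prop :=
  0 < k ∧ iasLambda A S < k ∧ k ≤ S.ncard ∧ k ≤ Sᶜ.ncard

/-- A cyclic `k`-separation: `λ(S) < k` and both `S` and `W - S` are dependent. -/
def CyclicSep (A : Matrix V V (ZMod 2)) (k : ℕ) (S : Set (V × Fin 3)) : Prop :=
  0 < k ∧ iasLambda A S < k ∧ ¬ iasIndep A S ∧ ¬ iasIndep A Sᶜ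

/-- A vertical `k`-separation: `λ(S) < k` and `r(S), r(W - S) ≥ k`. -/
def VerticalSep (A : Matrix V V (ZMod 2)) (k : ℕ) (S : Set (V × Fin 3)) : Prop :=
  0 < k ∧ iasLambda A S < k ∧ k ≤ iasRank A S ∧ k ≤ iasRank A Sᶜ

/-- `τ(M) = min {k : M has an ordinary k-separation}`, with `min ∅ = ∞`. -/
noncomputable def iasTau (A : Matrix V V (ZMod 2)) : ℕ∞ :=
  sInf {k : ℕ∞ | ∃ m : ℕ, (m : ℕ∞) = k ∧ ∃ S, OrdinarySep A m S}

/-- `κ*(M) = min ({k : M has a cyclic k-separation} ∪ {|W| - r(M)})`. -/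
noncomputable def iasKappaStar (A : Matrix V V (ZMod 2)) : ℕ :=
  sInf ({k : ℕ | ∃ S, CyclicSep A k S} ∪ {3 * Fintype.card V - iasRank A Set.univ})

/-- `κ(M) = min ({k : M has a vertical k-separation} ∪ {r(M)})`. -/
noncomputable def iasKappa (A : Matrix V V (ZMod 2)) : ℕ :=
  sInf ({k : ℕ | ∃ S, VerticalSep A k S} ∪ {iasRank A Set.univ})

/-- The simple graph underlying a looped simple graph given by its adjacency matrix. -/
def toSimpleGraph (A : Matrix V V (ZMod 2)) : SimpleGraph V where
  Adj v w := v ≠ w ∧ A v w = 1 ∧ A w v = 1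
  symm := ⟨fun v w ⟨h1, h2, h3⟩ => ⟨Ne.symm h1, h3, h2⟩⟩
  loopless := ⟨fun v h => h.1 rfl⟩

/-- The open neighborhood `N_G(v)`. -/
def nbhd (A : Matrix V V (ZMod 2)) (v : V) : Set V := {u | u ≠ v ∧ A v u = 1}

/-- `v` is a pendant vertex: `N_G(v) = {w}` for some `w`. -/
def IsPendant (A : Matrix V V (ZMod 2)) (v : V) : Prop := ∃ w, nbhd A v = {w}

/-- `G` has a pair of twin vertices: `v ≠ w` with `N_G(v) - {w} = N_G(w) - {v}`. -/
def HasTwins (A : Matrix V V (ZMod 2)) : Prop :=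
  ∃ v w, v ≠ w ∧ nbhd A v \ {w} = nbhd A w \ {v}

/-- The cut-rank `c_G(X)`: the GF(2)-rank of the submatrix `A[V - X, X]`
(columns indexed by `X`, rows indexed by `V - X`). -/
noncomputable def cutRank (A : Matrix V V (ZMod 2)) (X : Set V) : ℕ :=
  Module.finrank (ZMod 2)
    (Submodule.span (ZMod 2) ((fun x : V => fun w : ↥(Xᶜ) => A w.1 x) '' X))

/-- `τ_G(X) = ⋃_{x ∈ X} τ_G(x)`, the union of the vertex triples of members of `X`. -/
def tauSet (X : Set V) : Set (V × Fin 3) := {p | p.1 ∈ X}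

/-- Loop complementation at `v`. -/
def loopComp (A : Matrix V V (ZMod 2)) (v : V) : Matrix V V (ZMod 2) :=
  fun x y => A x y + if x = v ∧ y = v then 1 else 0

/-- Simple local complementation at `v`. -/
def simpleLocalComp (A : Matrix V V (ZMod 2)) (v : V) : Matrix V V (ZMod 2) :=
  fun x y => A x y +
    if x ≠ y ∧ (x ≠ v ∧ A v x = 1) ∧ (y ≠ v ∧ A v y = 1) then 1 else 0

/-- Non-simple local complementation at `v`. -/
def nonSimpleLocalComp (A : Matrix V V (ZMod 2)) (v : V) : Matrix V V (ZMod 2) :=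
  fun x y => simpleLocalComp A v x y + if x = y ∧ x ≠ v ∧ A v x = 1 then 1 else 0

/-- One local move. -/
def LocalStep (A B : Matrix V V (ZMod 2)) : Prop :=
  ∃ v, B = loopComp A v ∨ B = simpleLocalComp A v ∨ B = nonSimpleLocalComp A v

/-- Local equivalence: a finite sequence of loop complementations and
(simple or non-simple) local complementations. -/
def LocallyEquiv (A B : Matrix V V (ZMod 2)) : Prop :=
  Relation.ReflTransGen LocalStep A B

/-- `G` has a split: a bipartition `(V₁, V₂)` of `V` with `|V₁|, |V₂| ≥ 2` such that the
GF(2)-rank of `A[V₁, V₂]` is at most 1. -/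
def HasSplit (A : Matrix V V (ZMod 2)) : Prop :=
  ∃ X : Set V, 2 ≤ X.ncard ∧ 2 ≤ Xᶜ.ncard ∧ cutRank A X ≤ 1

/-- A transverse circuit: a circuit of the isotropic matroid meeting each
vertex triple at most once. -/
def IsTransverseCircuit (A : Matrix V V (ZMod 2)) (C : Set (V × Fin 3)) : Prop :=
  iasCircuit A C ∧ ∀ p ∈ C, ∀ q ∈ C, p.1 = q.1 → p = q

/-- An isotropic `k`-separation of `G`: `|X|, |V - X| ≥ k` and `c_G(X) < k`. -/
def IsotropicSep (A : Matrix V V (ZMod 2)) (k : ℕ) (X : Set V) : Prop :=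
  k ≤ X.ncard ∧ k ≤ Xᶜ.ncard ∧ cutRank A X < k

/-- The isotropic connectivity `κ_B(G)`, with `min ∅ = ∞`. -/
noncomputable def kappaB (A : Matrix V V (ZMod 2)) : ℕ∞ :=
  sInf {j : ℕ∞ | ∃ k : ℕ, (k : ℕ∞) = j ∧ ∃ X, IsotropicSep A k X}

/-- The 5-cycle `C₅`. -/
def C5mat : Matrix (Fin 5) (Fin 5) (ZMod 2) :=
  fun i j => if (i.val + 1) % 5 = j.val ∨ (j.val + 1) % 5 = i.val then 1 else 0

/-- The wheel `W₅` : a 5-cycle on `{0,…,4}` plus a hub `5` adjacent to all. -/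
def W5mat : Matrix (Fin 6) (Fin 6) (ZMod 2) :=
  fun i j =>
    if (i.val = 5 ∧ j.val ≠ 5) ∨ (j.val = 5 ∧ i.val ≠ 5) then 1
    else if i.val ≠ 5 ∧ j.val ≠ 5 ∧ ((i.val + 1) % 5 = j.val ∨ (j.val + 1) % 5 = i.val) then 1
    else 0

/-!
Since `ψ(v) = φ(v) + χ(v)`, the columns of `τ_G(X)` span the image of the linear map
`x ↦ ∑_{v ∈ X} (x v).1 • φ(v) + (x v).2 • χ(v)` on `X → GF(2)²`, so by rank–nullity
`r(τ_G(X)) = 2|X| - dim ker`. The column of `(v, i)` is the image of the vector supported at `v`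
with value `kleinLabel i`. A subtransversal thus lifts to vectors with pairwise distinct
supports, which are independent, so it is independent when the map is injective. Conversely
a nonzero kernel vector `x` selects at each `v` with `x v ≠ 0` the element of `τ_G(v)` labelled
`x v`; these columns sum to zero, so they form a dependent subtransversal, which contains a
transverse circuit.
-/

open Function Module Submodule

theorem linearIndependent_pi_single {ι κ K M : Type*} [Field K] [AddCommGroup M] [Module K M]
    [DecidableEq κ] {σ : ι → κ} (hσ : Injective σ) {c : ι → M} (hc : ∀ i, c i ≠ 0) :
    LinearIndependent K fun i => (Pi.single (σ i) (c i) : κ → M) := by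
  classical
  refine linearIndependent_iff'.2 fun s g hg i hi => ?_
  have hgi := congrFun hg (σ i)
  simp only [Finset.sum_apply, Pi.smul_apply, Pi.single_apply, hσ.eq_iff, smul_ite, smul_zero,
    Finset.sum_ite_eq, if_pos hi, Pi.zero_apply] at hgi
  exact (smul_eq_zero.1 hgi).resolve_right (hc i)

theorem not_linearIndependent_of_sum_eq_zero {ι R M : Type*} [Ring R] [Nontrivial R]
    [AddCommGroup M] [Module R M] [Fintype ι] [Nonempty ι] {v : ι → M} (h : ∑ i, v i = 0) :
    ¬ LinearIndependent R v :=
  Fintype.not_linearIndependent_iff.2 ⟨1, by simpa using h, Classical.arbitrary ι, one_ne_zero⟩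

/-- The three nonzero vectors of `GF(2)²`: the coefficients of `φ(v)` and `χ(v)` in the
column `(v, i)`. -/
def kleinLabel : Fin 3 → ZMod 2 × ZMod 2 := ![(1, 0), (0, 1), (1, 1)]

theorem kleinLabel_ne_zero (i : Fin 3) : kleinLabel i ≠ 0 := by
  revert i; decide

theorem exists_kleinLabel_eq (k : ZMod 2 × ZMod 2) (hk : k ≠ 0) : ∃ i, kleinLabel i = k := by
  revert k; decide

section IsotropicMatroid

variable (A : Matrix V V (ZMod 2)) (X : Set V) [Fintype X]

omit [Fintype V]

theorem iasCol_two (v : V) : iasCol A (v, 2) = iasCol A (v, 0) + iasCol A (v, 1) := by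
  ext w
  simp [iasCol, add_comm]

def iasPairMap : (X → ZMod 2 × ZMod 2) →ₗ[ZMod 2] V → ZMod 2 :=
  ∑ v : X, ((LinearMap.fst _ _ _ ∘ₗ LinearMap.proj v).smulRight (iasCol A (v, 0)) +
    (LinearMap.snd _ _ _ ∘ₗ LinearMap.proj v).smulRight (iasCol A (v, 1)))

theorem iasPairMap_apply (x : X → ZMod 2 × ZMod 2) :
    iasPairMap A X x = ∑ v : X, ((x v).1 • iasCol A (v, 0) + (x v).2 • iasCol A (v, 1)) := by
  simp [iasPairMap]

theorem iasPairMap_single (v : X) (i : Fin 3) :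
    iasPairMap A X (Pi.single v (kleinLabel i)) = iasCol A (v, i) := by
  rw [iasPairMap_apply, Finset.sum_eq_single v (fun w _ hw => by simp [hw]) (by simp)]
  fin_cases i <;> simp [kleinLabel, iasCol_two]

theorem range_iasPairMap :
    LinearMap.range (iasPairMap A X) = span (ZMod 2) (iasCol A '' tauSet X) := by
  apply le_antisymm
  · rintro _ ⟨x, rfl⟩
    rw [iasPairMap_apply]
    exact sum_mem fun v _ => add_mem (smul_mem _ _ (subset_span ⟨(v, 0), v.2, rfl⟩))
      (smul_mem _ _ (subset_span ⟨(v, 1), v.2, rfl⟩))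
  · rw [span_le]
    rintro _ ⟨p, hp, rfl⟩
    exact ⟨_, iasPairMap_single A X ⟨p.1, hp⟩ p.2⟩

theorem iasIndep_of_injOn (hker : LinearMap.ker (iasPairMap A X) = ⊥) {S : Set (V × Fin 3)}
    (hS : S ⊆ tauSet X) (hinj : S.InjOn Prod.fst) : iasIndep A S := by
  let σ : S → X := fun s => ⟨s.1.1, hS s.2⟩
  have hσ : Injective σ := fun s t h => Subtype.ext (hinj s.2 t.2 (congrArg Subtype.val h))
  have hcol : (fun s : S => iasCol A s) =
      iasPairMap A X ∘ fun s => Pi.single (σ s) (kleinLabel s.1.2) :=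
    funext fun s => (iasPairMap_single A X (σ s) s.1.2).symm
  rw [iasIndep, hcol]
  exact (linearIndependent_pi_single hσ fun s => kleinLabel_ne_zero _).map' _ hker

theorem exists_injOn_not_iasIndep (hker : LinearMap.ker (iasPairMap A X) ≠ ⊥) :
    ∃ S ⊆ tauSet X, S.InjOn Prod.fst ∧ ¬ iasIndep A S := by
  obtain ⟨x, hx, hx0⟩ := (Submodule.ne_bot_iff _).1 hker
  let D := {v : X // x v ≠ 0}
  choose label hlabel using fun v : D => exists_kleinLabel_eq _ v.2
  let σ : D → V × Fin 3 := fun v => (v.1.1, label v)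
  have hσ : Injective (Prod.fst ∘ σ) := fun v w h => Subtype.ext (Subtype.ext h)
  refine ⟨Set.range σ, Set.range_subset_iff.2 fun v => v.1.2, hσ.injOn_range, ?_⟩
  obtain ⟨v, hv⟩ := Function.ne_iff.1 hx0
  have : Nonempty D := ⟨⟨v, hv⟩⟩
  rw [iasIndep, ← LinearIndepOn, linearIndepOn_range_iff hσ.of_comp]
  refine not_linearIndependent_of_sum_eq_zero ?_
  calc ∑ v : D, iasCol A (σ v) = iasPairMap A X (∑ v : D, Pi.single v.1 (x v)) := by
        simp_rw [map_sum, ← hlabel, iasPairMap_single]; rfl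
    _ = iasPairMap A X x := by
        congr 1
        rw [← Finset.sum_subtype (Finset.univ.filter (x · ≠ 0)) (by simp)
          (fun v => Pi.single v (x v)), Finset.sum_filter_of_ne fun v _ h => by simpa using h,
          Finset.univ_sum_single]
    _ = 0 := hx

end IsotropicMatroid

theorem iasRank_tauSet_add_finrank_ker (A : Matrix V V (ZMod 2)) (X : Set V) [Fintype X] :
    iasRank A (tauSet X) + finrank (ZMod 2) (LinearMap.ker (iasPairMap A X)) = 2 * X.ncard := by
  rw [iasRank, ← range_iasPairMap, LinearMap.finrank_range_add_finrank_ker,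
    Module.finrank_pi_fintype, ← Nat.card_coe_set_eq, Nat.card_eq_fintype_card]
  simp [mul_comm]

theorem exists_iasCircuit_subset {A : Matrix V V (ZMod 2)} {S : Set (V × Fin 3)}
    (h : ¬ iasIndep A S) : ∃ C ⊆ S, iasCircuit A C := by
  obtain ⟨C, hCS, hmin⟩ := (Set.toFinite {T | ¬ iasIndep A T}).exists_le_minimal h
  exact ⟨C, hCS, hmin.prop, fun T hT => by_contra fun hdep => hT.2 (hmin.le_of_le hdep hT.1)⟩

theorem ker_iasPairMap_eq_bot_iff (A : Matrix V V (ZMod 2)) (X : Set V) [Fintype X] :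
    LinearMap.ker (iasPairMap A X) = ⊥ ↔ ∀ C, IsTransverseCircuit A C → ¬ C ⊆ tauSet X := by
  constructor
  · rintro h C ⟨hC, hinj⟩ hCX
    exact hC.1 (iasIndep_of_injOn A X h hCX hinj)
  · intro h
    by_contra hne
    obtain ⟨S, hSX, hinj, hdep⟩ := exists_injOn_not_iasIndep A X hne
    obtain ⟨C, hCS, hC⟩ := exists_iasCircuit_subset hdep
    exact h C ⟨hC, hinj.mono hCS⟩ (hCS.trans hSX)

theorem stmt17_general (A : Matrix V V (ZMod 2)) (X : Set V) :
    List.TFAE [2 * X.ncard ≤ iasRank A (tauSet X),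
      iasRank A (tauSet X) = 2 * X.ncard,
      ∀ C, IsTransverseCircuit A C → ¬ C ⊆ tauSet X] := by
  classical
  have hrank := iasRank_tauSet_add_finrank_ker A X
  have hker := ker_iasPairMap_eq_bot_iff A X
  rw [← Submodule.finrank_eq_zero] at hker
  tfae_have 1 ↔ 2 := by omega
  tfae_have 2 ↔ 3 := by rw [← hker]; omega
  tfae_finish

theorem stmt17 (A : Matrix V V (ZMod 2)) (hA : A.IsSymm) (X : Set V) :
    List.TFAE [2 * X.ncard ≤ iasRank A (tauSet X),
      iasRank A (tauSet X) = 2 * X.ncard,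
      ∀ C, IsTransverseCircuit A C → ¬ C ⊆ tauSet X] :=
  stmt17_general A X
end

section
/- Let G be a graph with κ(M[IAS(G)]) = n. Then the diameter of G is at most 2; that is, for every pair of distinct vertices v ≠ w, either v and w are adjacent or they have a common neighbor. -/
open scoped ENat

variable {V : Type*} [Fintype V] [DecidableEq V]

/-!
Suppose `v` and `w` are at distance at least 3, and let `X = {v} ∪ N(v)`. The column of `v` in
`A[V - X, X]` and the column of `w` in `A[X, V - X]` vanish, so the cut-rank `c = c(X)` is smaller
than both `|X|` and `|V - X|`. Since `r(τ(X)) = |X| + c` and, by symmetry of `A`, `λ(τ(X)) = 2c`,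
the set `τ(X)` is a vertical `(2c + 1)`-separation with `2c + 1 < n`, so `κ < n`.
-/

open Module

section CutRank

variable (A : Matrix V V (ZMod 2))

def restrictCompl (X : Set V) : (V → ZMod 2) →ₗ[ZMod 2] (↥Xᶜ → ZMod 2) :=
  LinearMap.funLeft (ZMod 2) (ZMod 2) Subtype.val

lemma ker_restrictCompl_le_span (X : Set V) :
    LinearMap.ker (restrictCompl X) ≤ Submodule.span (ZMod 2) (iasCol A '' tauSet X) := by
  intro g hg
  rw [← Finset.univ_sum_single g]
  refine Submodule.sum_mem _ fun u _ => ?_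
  by_cases hu : u ∈ X
  · have hcol : iasCol A (u, 0) = Pi.single u 1 := by
      funext t; simp [iasCol, Pi.single_apply]
    rw [← mul_one (g u), ← smul_eq_mul, Pi.single_smul', ← hcol]
    exact Submodule.smul_mem _ _ (Submodule.subset_span ⟨(u, 0), hu, rfl⟩)
  · have : g u = 0 := congrFun (LinearMap.mem_ker.mp hg) ⟨u, hu⟩
    simp [this]

omit [DecidableEq V] in
lemma finrank_ker_restrictCompl (X : Set V) :
    finrank (ZMod 2) (LinearMap.ker (restrictCompl X)) = X.ncard := by
  classical
  have hsurj : Function.Surjective (restrictCompl X) :=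
    LinearMap.funLeft_surjective_of_injective _ _ _ Subtype.val_injective
  have hrn := (restrictCompl X).finrank_range_add_finrank_ker
  rw [LinearMap.range_eq_top.mpr hsurj, finrank_top, Module.finrank_pi, Module.finrank_pi] at hrn
  have hcard := Set.ncard_add_ncard_compl X
  simp only [← Nat.card_coe_set_eq, Nat.card_eq_fintype_card] at hcard ⊢
  omega

omit [Fintype V] in
lemma map_restrictCompl_span (X : Set V) :
    (Submodule.span (ZMod 2) (iasCol A '' tauSet X)).map (restrictCompl X) =
      Submodule.span (ZMod 2) ((fun x : V => fun w : ↥Xᶜ => A w.1 x) '' X) := by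
  have hcol : ∀ u ∈ X, ∀ i : Fin 3, restrictCompl X (iasCol A (u, i)) =
      if i = 0 then 0 else fun w : ↥Xᶜ => A w.1 u := by
    intro u hu i
    funext w
    have hwu : w.1 ≠ u := fun h => w.2 (h ▸ hu)
    fin_cases i <;> simp [restrictCompl, LinearMap.funLeft, iasCol, hwu]
  rw [Submodule.map_span]
  apply le_antisymm
  · rw [Submodule.span_le]
    rintro _ ⟨_, ⟨⟨u, i⟩, hu, rfl⟩, rfl⟩
    rw [SetLike.mem_coe, hcol u hu i]
    split_ifs
    · exact Submodule.zero_mem _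
    · exact Submodule.subset_span ⟨u, hu, rfl⟩
  · rw [Submodule.span_le]
    rintro _ ⟨u, hu, rfl⟩
    exact Submodule.subset_span ⟨_, ⟨(u, 1), hu, rfl⟩, hcol u hu 1⟩

/-- The `φ`-columns of `τ(X)` span the vectors supported on `X`, and modulo those the `χ`- and
`ψ`-columns of `τ(X)` reduce to the columns of `A[V - X, X]`. -/
lemma iasRank_tauSet (X : Set V) : iasRank A (tauSet X) = X.ncard + cutRank A X := by
  set U := Submodule.span (ZMod 2) (iasCol A '' tauSet X)
  have hrn := (restrictCompl X ∘ₗ U.subtype).finrank_range_add_finrank_ker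
  rw [LinearMap.range_comp, Submodule.range_subtype, map_restrictCompl_span, LinearMap.ker_comp,
    LinearEquiv.finrank_eq (Submodule.comapSubtypeEquivOfLe (ker_restrictCompl_le_span A X)),
    finrank_ker_restrictCompl] at hrn
  rw [iasRank, cutRank, ← hrn, add_comm]

lemma iasRank_univ : iasRank A Set.univ = Fintype.card V := by
  have : IsEmpty ↥(Set.univ : Set V)ᶜ := by simp
  have h := iasRank_tauSet A Set.univ
  rwa [show tauSet (Set.univ : Set V) = Set.univ from rfl, Set.ncard_univ, Nat.card_eq_fintype_card,
    cutRank, Module.finrank_zero_of_subsingleton, add_zero] at h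

end CutRank

lemma zmod_two_eq_zero_of_ne_one {a : ZMod 2} (h : a ≠ 1) : a = 0 := by
  revert a; decide

section Separation

variable {A : Matrix V V (ZMod 2)}

omit [Fintype V] [DecidableEq V] in
lemma tauSet_compl (X : Set V) : (tauSet X)ᶜ = tauSet Xᶜ := rfl

omit [Fintype V] [DecidableEq V] in
lemma cutRank_eq_rank_submatrix (X : Set V) [Fintype ↥X] :
    cutRank A X = (A.submatrix (Subtype.val : ↥Xᶜ → V) (Subtype.val : ↥X → V)).rank := by
  rw [Matrix.rank_eq_finrank_span_cols, cutRank, Set.image_eq_range]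
  rfl

omit [DecidableEq V] in
lemma cutRank_compl (hA : A.IsSymm) (X : Set V) : cutRank A Xᶜ = cutRank A X := by
  classical
  rw [cutRank_eq_rank_submatrix, cutRank_eq_rank_submatrix,
    ← Matrix.rank_transpose (A.submatrix (Subtype.val : ↥Xᶜᶜ → V) Subtype.val),
    Matrix.transpose_submatrix, hA.eq]
  exact (Matrix.rank_submatrix (A.submatrix (Subtype.val : ↥Xᶜ → V) (Subtype.val : ↥Xᶜᶜ → V))
    (Equiv.refl _) (Equiv.setCongr (compl_compl X).symm)).symm

omit [DecidableEq V] in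
lemma cutRank_lt_ncard_of_col_eq_zero {X : Set V} {x₀ : V} (hx₀ : x₀ ∈ X)
    (hzero : ∀ w ∉ X, A w x₀ = 0) : cutRank A X < X.ncard := by
  classical
  set f : V → ↥Xᶜ → ZMod 2 := fun x w => A w.1 x
  have hspan : Submodule.span (ZMod 2) (f '' X) ≤ Submodule.span (ZMod 2) (f '' (X \ {x₀})) := by
    rw [Submodule.span_le]
    rintro _ ⟨x, hx, rfl⟩
    by_cases hxx : x = x₀
    · have hf : f x = 0 := funext fun w => hxx ▸ hzero w w.2
      rw [SetLike.mem_coe, hf]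
      exact Submodule.zero_mem _
    · exact Submodule.subset_span ⟨x, ⟨hx, hxx⟩, rfl⟩
  calc cutRank A X ≤ finrank (ZMod 2) (Submodule.span (ZMod 2) (f '' (X \ {x₀}))) :=
        Submodule.finrank_mono hspan
    _ ≤ (f '' (X \ {x₀})).ncard := by
        rw [Set.ncard_eq_toFinset_card']
        exact finrank_span_le_card _
    _ ≤ (X \ {x₀}).ncard := Set.ncard_image_le (Set.toFinite _)
    _ < X.ncard := Set.ncard_sdiff_singleton_lt_of_mem hx₀

lemma iasLambda_tauSet (hA : A.IsSymm) (X : Set V) :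
    iasLambda A (tauSet X) = 2 * cutRank A X := by
  have hcard := Set.ncard_add_ncard_compl X
  rw [Nat.card_eq_fintype_card] at hcard
  rw [iasLambda, tauSet_compl, iasRank_tauSet, iasRank_tauSet, cutRank_compl hA, iasRank_univ]
  omega

omit [Fintype V] in
lemma iasKappa_le_of_verticalSep {k : ℕ} {S : Set (V × Fin 3)} (hS : VerticalSep A k S) :
    iasKappa A ≤ k :=
  Nat.sInf_le (Or.inl ⟨S, hS⟩)

lemma iasKappa_lt_card_of_cutRank_lt (hA : A.IsSymm) {X : Set V} (hX : cutRank A X < X.ncard)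
    (hXc : cutRank A X < Xᶜ.ncard) : iasKappa A < Fintype.card V := by
  have hcard := Set.ncard_add_ncard_compl X
  rw [Nat.card_eq_fintype_card] at hcard
  have hsep : VerticalSep A (2 * cutRank A X + 1) (tauSet X) := by
    refine ⟨Nat.succ_pos _, ?_, ?_, ?_⟩
    · rw [iasLambda_tauSet hA]
      omega
    · rw [iasRank_tauSet]
      omega
    · rw [tauSet_compl, iasRank_tauSet, cutRank_compl hA]
      omega
  have := iasKappa_le_of_verticalSep hsep
  omega

end Separation

theorem stmt19 (A : Matrix V V (ZMod 2)) (hA : A.IsSymm)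
    (h : iasKappa A = Fintype.card V) :
    ∀ v w : V, v ≠ w →
      A v w = 1 ∨ ∃ u, u ≠ v ∧ u ≠ w ∧ A v u = 1 ∧ A w u = 1 := by
  intro v w hvw
  by_contra! hfar
  obtain ⟨hvw1, hno⟩ := hfar
  set X := insert v (nbhd A v)
  have hv : v ∈ X := Set.mem_insert v _
  have hw : w ∉ X := by
    rintro (rfl | ⟨-, h1⟩)
    exacts [hvw rfl, hvw1 h1]
  have hcol_v : ∀ u ∉ X, A u v = 0 := fun u hu =>
    hA.apply v u ▸ zmod_two_eq_zero_of_ne_one fun h1 => hu (Or.inr ⟨fun he => hu (he ▸ hv), h1⟩)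
  have hcol_w : ∀ u ∉ Xᶜ, A u w = 0 := by
    intro u hu
    rcases not_not.mp hu with rfl | ⟨huv, h1⟩
    · exact zmod_two_eq_zero_of_ne_one hvw1
    · have huw : u ≠ w := fun he => hvw1 (he ▸ h1)
      exact hA.apply w u ▸ zmod_two_eq_zero_of_ne_one (hno u huv huw h1)
  have hX := cutRank_lt_ncard_of_col_eq_zero hv hcol_v
  have hXc := cutRank_compl hA X ▸ cutRank_lt_ncard_of_col_eq_zero hw hcol_w
  exact (iasKappa_lt_card_of_cutRank_lt hA hX hXc).ne h
end
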